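/- arXiv:1303.5878 — 3 statements merged into one kernel-verified Lean document; each statement's English description precedes it below -/
import Mathlib

section
/- For any solution U = (P,Q,R) of the Appell system, the value of 4ac - b² in the representation U = a U₁ + b U₂ + c U₃ is independent of the choice of fundamental system: if {u,v} and {θ,φ} are two fundamental systems of the SL equation each having Wronskian 1, and U = a U₁ + b U₂ + c U₃ = γ₁ V₁ + γ₂ V₂ + γ₃ V₃ in the respective Appell bases, then 4ac - b² = 4γ₁γ₃ - γ₂². -/
/-- The value 4ac - b² in the Appell-basis representation of a solution is
independent of the choice of fundamental system with Wronskian 1: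
if U = a U₁ + b U₂ + c U₃ = γ₁ V₁ + γ₂ V₂ + γ₃ V₃, then 4ac - b² = 4γ₁γ₃ - γ₂². -/
theorem appell_invariant_basis_independent (q : ℝ → ℝ) (lam : ℝ)
    (u v θ φ : ℝ → ℝ) (a b c γ₁ γ₂ γ₃ : ℝ)
    (hq : Continuous q)
    (hu : Differentiable ℝ u) (hu' : Differentiable ℝ (deriv u))
    (hv : Differentiable ℝ v) (hv' : Differentiable ℝ (deriv v))
    (hθ : Differentiable ℝ θ) (hθ' : Differentiable ℝ (deriv θ))
    (hφ : Differentiable ℝ φ) (hφ' : Differentiable ℝ (deriv φ))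
    (hodeu : ∀ x, -(deriv (deriv u) x) + q x * u x = lam * u x)
    (hodev : ∀ x, -(deriv (deriv v) x) + q x * v x = lam * v x)
    (hodeθ : ∀ x, -(deriv (deriv θ) x) + q x * θ x = lam * θ x)
    (hodeφ : ∀ x, -(deriv (deriv φ) x) + q x * φ x = lam * φ x)
    (hWuv : ∀ x, u x * deriv v x - deriv u x * v x = 1)
    (hWθφ : ∀ x, θ x * deriv φ x - deriv θ x * φ x = 1)
    (hPeq : ∀ x, a * (deriv u x) ^ 2 + b * (deriv u x * deriv v x) + c * (deriv v x) ^ 2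
        = γ₁ * (deriv θ x) ^ 2 + γ₂ * (deriv θ x * deriv φ x) + γ₃ * (deriv φ x) ^ 2)
    (hQeq : ∀ x, a * (-2 * u x * deriv u x) + b * (-(deriv u x * v x + u x * deriv v x))
          + c * (-2 * v x * deriv v x)
        = γ₁ * (-2 * θ x * deriv θ x) + γ₂ * (-(deriv θ x * φ x + θ x * deriv φ x))
          + γ₃ * (-2 * φ x * deriv φ x))
    (hReq : ∀ x, a * (u x) ^ 2 + b * (u x * v x) + c * (v x) ^ 2
        = γ₁ * (θ x) ^ 2 + γ₂ * (θ x * φ x) + γ₃ * (φ x) ^ 2) :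
    4 * a * c - b ^ 2 = 4 * γ₁ * γ₃ - γ₂ ^ 2 := by
  have h1 := hPeq 0
  have h2 := hQeq 0
  have h3 := hReq 0
  have hw1 := hWuv 0
  have hw2 := hWθφ 0
  calc 4 * a * c - b ^ 2
      = (4 * a * c - b ^ 2) * (u 0 * deriv v 0 - deriv u 0 * v 0) ^ 2 := by rw [hw1]; ring
    _ = 4 * (a * (deriv u 0) ^ 2 + b * (deriv u 0 * deriv v 0) + c * (deriv v 0) ^ 2)
          * (a * (u 0) ^ 2 + b * (u 0 * v 0) + c * (v 0) ^ 2)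
        - (a * (-2 * u 0 * deriv u 0) + b * (-(deriv u 0 * v 0 + u 0 * deriv v 0))
          + c * (-2 * v 0 * deriv v 0)) ^ 2 := by ring
    _ = 4 * (γ₁ * (deriv θ 0) ^ 2 + γ₂ * (deriv θ 0 * deriv φ 0) + γ₃ * (deriv φ 0) ^ 2)
          * (γ₁ * (θ 0) ^ 2 + γ₂ * (θ 0 * φ 0) + γ₃ * (φ 0) ^ 2)
        - (γ₁ * (-2 * θ 0 * deriv θ 0) + γ₂ * (-(deriv θ 0 * φ 0 + θ 0 * deriv φ 0))
          + γ₃ * (-2 * φ 0 * deriv φ 0)) ^ 2 := by rw [h1, h2, h3]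
    _ = (4 * γ₁ * γ₃ - γ₂ ^ 2) * (θ 0 * deriv φ 0 - deriv θ 0 * φ 0) ^ 2 := by ring
    _ = 4 * γ₁ * γ₃ - γ₂ ^ 2 := by rw [hw2]; ring
end

section
/- If ψ₁(x) = p₁(x) exp(i k x) with p₁ periodic of period ℓ, p₁ continuous not identically zero, and 0 < kℓ < π, then the ratio (∫₀^{mℓ} ψ₁² dx) / (∫₀^{mℓ} |ψ₁|² dx) tends to 0 as m → ∞. -/
/-!
Squaring a Bloch wave `ψ₁ = p₁ · e^{ikx}` gives a quasi-periodic function,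
`ψ₁(x + ℓ)² = e^{2ikℓ} ψ₁(x)²`, so `∫₀^{mℓ} ψ₁²` is the geometric sum `∑_{j<m} e^{2ijkℓ}` times
`∫₀^ℓ ψ₁²`. Since `0 < 2kℓ < 2π`, the ratio `e^{2ikℓ}` is a unimodular number different from `1`,
and this sum stays bounded. On the other hand `|ψ₁|² = |p₁|²` is periodic, so `∫₀^{mℓ} |ψ₁|²`
grows like `m ∫₀^ℓ |p₁|²`, with a positive factor because `p₁` is continuous and not zero.
-/

open scoped Real
open Filter Finset intervalIntegral

theorem quasiPeriodic_add_nat_mul {M α : Type*} [Monoid M] [MulAction M α] {f : ℝ → α} {ℓ : ℝ}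
    {c : M} (hf : ∀ x, f (x + ℓ) = c • f x) (n : ℕ) (x : ℝ) :
    f (x + n * ℓ) = c ^ n • f x := by
  induction n with
  | zero => simp
  | succ n ih => rw [Nat.cast_succ, add_one_mul, ← add_assoc, hf, ih, pow_succ', mul_smul]

theorem norm_geom_sum_le {K : Type*} [NormedField K] {x : K} (hx : ‖x‖ ≤ 1) (hx1 : x ≠ 1)
    (n : ℕ) : ‖∑ i ∈ range n, x ^ i‖ ≤ 2 / ‖x - 1‖ := by
  rw [geom_sum_eq hx1, norm_div]
  gcongr
  calc ‖x ^ n - 1‖ ≤ ‖x ^ n‖ + ‖(1 : K)‖ := norm_sub_le _ _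
    _ ≤ 1 + 1 := by
      rw [norm_pow, norm_one]
      gcongr
      exact pow_le_one₀ (norm_nonneg x) hx
    _ = 2 := by norm_num

section QuasiPeriodic

variable {𝕜 E : Type*} [RCLike 𝕜] [NormedAddCommGroup E] [NormedSpace ℝ E] [NormedSpace 𝕜 E]
  [SMulCommClass ℝ 𝕜 E] {f : ℝ → E} {ℓ : ℝ} {c : 𝕜}

theorem intervalIntegral_nat_mul_of_quasiPeriodic (hf : ∀ x, f (x + ℓ) = c • f x)
    (h_int : ∀ a b, IntervalIntegrable f MeasureTheory.volume a b) (m : ℕ) :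
    ∫ x in 0..m * ℓ, f x = (∑ j ∈ range m, c ^ j) • ∫ x in 0..ℓ, f x := by
  induction m with
  | zero => simp
  | succ m ih =>
    have hlast : ∫ x in m * ℓ..(m + 1 : ℕ) * ℓ, f x = c ^ m • ∫ x in 0..ℓ, f x := by
      rw [← integral_smul]
      simp_rw [← quasiPeriodic_add_nat_mul hf m]
      rw [integral_comp_add_right]
      push_cast
      ring_nf
    rw [← integral_add_adjacent_intervals (h_int _ _) (h_int _ _), ih, hlast, sum_range_succ,
      add_smul]

theorem norm_intervalIntegral_nat_mul_le_of_quasiPeriodic (hf : ∀ x, f (x + ℓ) = c • f x)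
    (h_int : ∀ a b, IntervalIntegrable f MeasureTheory.volume a b) (hc : ‖c‖ ≤ 1) (hc1 : c ≠ 1)
    (m : ℕ) : ‖∫ x in 0..m * ℓ, f x‖ ≤ 2 / ‖c - 1‖ * ‖∫ x in 0..ℓ, f x‖ := by
  rw [intervalIntegral_nat_mul_of_quasiPeriodic hf h_int, norm_smul]
  gcongr
  exact norm_geom_sum_le hc hc1 m

end QuasiPeriodic

theorem Function.Periodic.intervalIntegral_pos {g : ℝ → ℝ} {T x₀ : ℝ} (hg : Function.Periodic g T)
    (hT : 0 < T) (hc : Continuous g) (h0 : ∀ x, 0 ≤ g x) (hx₀ : 0 < g x₀) :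
    0 < ∫ x in 0..T, g x := by
  rw [← zero_add T, hg.intervalIntegral_add_eq 0 x₀]
  exact integral_pos (by linarith) hc.continuousOn (fun x _ => h0 x)
    ⟨x₀, ⟨le_rfl, by linarith⟩, hx₀⟩

namespace Complex

theorem exp_ofReal_mul_I_ne_one {θ : ℝ} (h0 : 0 < θ) (h2π : θ < 2 * π) : exp (θ * I) ≠ 1 := by
  rw [Ne, exp_eq_one_iff]
  rintro ⟨n, hn⟩
  have hθ : θ = n * (2 * π) := by simpa using congrArg im hn
  have hn0 : (0 : ℝ) < n := by nlinarith [Real.pi_pos]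
  have hn1 : (n : ℝ) < 1 := by nlinarith [Real.pi_pos]
  norm_cast at hn0 hn1
  omega

theorem sq_periodic_mul_exp_add_period {p : ℝ → ℂ} {ℓ : ℝ} (hp : Function.Periodic p ℓ)
    (k x : ℝ) : (p (x + ℓ) * exp (I * k * ↑(x + ℓ))) ^ 2 =
      exp (↑(2 * (k * ℓ)) * I) * (p x * exp (I * k * x)) ^ 2 := by
  rw [hp, mul_pow, mul_pow, ← exp_nat_mul, ← exp_nat_mul, mul_left_comm _ (p x ^ 2), ← exp_add]
  push_cast
  ring_nf

end Complex

/-- For ψ₁(x) = p₁(x) exp(ikx) with p₁ continuous, ℓ-periodic, not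
identically zero, and 0 < kℓ < π, the ratio (∫₀^{mℓ} ψ₁²)/(∫₀^{mℓ} |ψ₁|²) → 0. -/
theorem floquet_condition_A (ℓ k : ℝ) (p₁ : ℝ → ℂ)
    (hℓ : 0 < ℓ) (hk0 : 0 < k * ℓ) (hkπ : k * ℓ < Real.pi)
    (hp_cont : Continuous p₁)
    (hp_per : ∀ x, p₁ (x + ℓ) = p₁ x)
    (hp_ne : ∃ x, p₁ x ≠ 0)
    (ψ₁ : ℝ → ℂ)
    (hψ : ∀ x, ψ₁ x = p₁ x * Complex.exp (Complex.I * k * x)) :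
    Tendsto (fun m : ℕ =>
        ‖∫ x in (0:ℝ)..(m * ℓ), (ψ₁ x) ^ 2‖ /
          ∫ x in (0:ℝ)..(m * ℓ), ‖ψ₁ x‖ ^ 2)
      atTop (nhds 0) := by
  have hp : Function.Periodic p₁ ℓ := hp_per
  have hψ_cont : Continuous ψ₁ := by
    rw [funext hψ]
    fun_prop
  have hshift (x : ℝ) :
      ψ₁ (x + ℓ) ^ 2 = Complex.exp (↑(2 * (k * ℓ)) * Complex.I) • ψ₁ x ^ 2 := by
    simp only [hψ, Complex.sq_periodic_mul_exp_add_period hp, smul_eq_mul]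
  have hnum (m : ℕ) := norm_intervalIntegral_nat_mul_le_of_quasiPeriodic hshift
    (fun a b => (hψ_cont.pow 2).intervalIntegrable a b) (Complex.norm_exp_ofReal_mul_I _).le
    (Complex.exp_ofReal_mul_I_ne_one (by linarith) (by linarith)) m
  have hp_sq : Function.Periodic (fun x => ‖p₁ x‖ ^ 2) ℓ := hp.comp fun z => ‖z‖ ^ 2
  have hp_sq_cont : Continuous fun x => ‖p₁ x‖ ^ 2 := by fun_prop
  have hden (m : ℕ) : ∫ x in 0..m * ℓ, ‖ψ₁ x‖ ^ 2 = m * ∫ x in 0..ℓ, ‖p₁ x‖ ^ 2 := by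
    simpa [hψ, Complex.norm_exp] using
      hp_sq.intervalIntegral_add_zsmul_eq m 0 fun a b => hp_sq_cont.intervalIntegrable a b
  obtain ⟨x₀, hx₀⟩ := hp_ne
  have hB : 0 < ∫ x in 0..ℓ, ‖p₁ x‖ ^ 2 :=
    hp_sq.intervalIntegral_pos hℓ hp_sq_cont (fun _ => sq_nonneg _)
      (pow_pos (norm_pos_iff.mpr hx₀) 2)
  simp_rw [hden]
  exact tendsto_bdd_div_atTop_nhds_zero (.of_forall fun m => norm_nonneg _) (.of_forall hnum)
    (tendsto_natCast_atTop_atTop.atTop_mul_const hB)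
end

section
/- If q is periodic of period ℓ, then the quadratic form Φ(x) = v(ℓ)u(x)² - [u(ℓ)-v'(ℓ)]u(x)v(x) - u'(ℓ)v(x)² is periodic with period ℓ: Φ(x+ℓ) = Φ(x) for all x ≥ 0. -/
/-- Wronskian of two solutions of the same second-order linear ODE is constant. -/
lemma wron_const {f g : ℝ → ℝ} (hf : Differentiable ℝ f) (hf' : Differentiable ℝ (deriv f))
    (hg : Differentiable ℝ g) (hg' : Differentiable ℝ (deriv g))
    (h : ∀ x, f x * deriv (deriv g) x = deriv (deriv f) x * g x) (x : ℝ) :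
    f x * deriv g x - deriv f x * g x = f 0 * deriv g 0 - deriv f 0 * g 0 := by
  have hW : Differentiable ℝ (fun x => f x * deriv g x - deriv f x * g x) :=
    (hf.mul hg').sub (hf'.mul hg)
  apply is_const_of_deriv_eq_zero hW _ x 0
  intro y
  have h1 : HasDerivAt (fun x => f x * deriv g x - deriv f x * g x)
      ((deriv f y * deriv g y + f y * deriv (deriv g) y)
        - (deriv (deriv f) y * g y + deriv f y * deriv g y)) y :=
    (((hf y).hasDerivAt.mul (hg' y).hasDerivAt)).sub
      (((hf' y).hasDerivAt.mul (hg y).hasDerivAt))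
  have := h y
  rw [h1.deriv]; linarith

/-- If q is ℓ-periodic, the quadratic form
Φ(x) = v(ℓ)u(x)² - [u(ℓ)-v'(ℓ)]u(x)v(x) - u'(ℓ)v(x)² satisfies Φ(x+ℓ) = Φ(x) for x ≥ 0. -/
theorem quadratic_form_periodic (q : ℝ → ℝ) (lam ℓ : ℝ) (u v : ℝ → ℝ)
    (hq : Continuous q) (hℓ : 0 < ℓ)
    (hq_per : ∀ x, q (x + ℓ) = q x)
    (hu : Differentiable ℝ u) (hu' : Differentiable ℝ (deriv u))
    (hv : Differentiable ℝ v) (hv' : Differentiable ℝ (deriv v))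
    (hodeu : ∀ x, -(deriv (deriv u) x) + q x * u x = lam * u x)
    (hodev : ∀ x, -(deriv (deriv v) x) + q x * v x = lam * v x)
    (hu0 : u 0 = 1) (hu'0 : deriv u 0 = 0) (hv0 : v 0 = 0) (hv'0 : deriv v 0 = 1)
    (Φ : ℝ → ℝ)
    (hΦ : ∀ x, Φ x = v ℓ * (u x) ^ 2 - (u ℓ - deriv v ℓ) * (u x * v x)
        - deriv u ℓ * (v x) ^ 2) :
    ∀ x, 0 ≤ x → Φ (x + ℓ) = Φ x := by
  have hu2 : ∀ y, deriv (deriv u) y = (q y - lam) * u y := by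
    intro y; have := hodeu y; ring_nf; ring_nf at this; linarith
  have hv2 : ∀ y, deriv (deriv v) y = (q y - lam) * v y := by
    intro y; have := hodev y; ring_nf; ring_nf at this; linarith
  -- Wronskian of u, v is 1
  have hWuv : ∀ y, u y * deriv v y - deriv u y * v y = 1 := by
    intro y
    have := wron_const hu hu' hv hv' (fun z => by rw [hu2, hv2]; ring) y
    rw [hu0, hu'0, hv0, hv'0] at this; linarith
  -- shifted solutions
  set A : ℝ → ℝ := fun x => u (x + ℓ) with hAdef
  set B : ℝ → ℝ := fun x => v (x + ℓ) with hBdef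
  have hA : Differentiable ℝ A := hu.comp (differentiable_id.add_const ℓ)
  have hB : Differentiable ℝ B := hv.comp (differentiable_id.add_const ℓ)
  have hAd : deriv A = fun x => deriv u (x + ℓ) :=
    funext fun x => deriv_comp_add_const u ℓ x
  have hBd : deriv B = fun x => deriv v (x + ℓ) :=
    funext fun x => deriv_comp_add_const v ℓ x
  have hA' : Differentiable ℝ (deriv A) := by
    rw [hAd]; exact hu'.comp (differentiable_id.add_const ℓ)
  have hB' : Differentiable ℝ (deriv B) := by
    rw [hBd]; exact hv'.comp (differentiable_id.add_const ℓ)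
  have hA2 : ∀ y, deriv (deriv A) y = (q y - lam) * A y := by
    intro y
    rw [hAd]
    rw [deriv_comp_add_const (deriv u) ℓ y, hu2 (y + ℓ), hq_per y]
  have hB2 : ∀ y, deriv (deriv B) y = (q y - lam) * B y := by
    intro y
    rw [hBd]
    rw [deriv_comp_add_const (deriv v) ℓ y, hv2 (y + ℓ), hq_per y]
  have hA0 : A 0 = u ℓ := by simp [hAdef]
  have hB0 : B 0 = v ℓ := by simp [hBdef]
  have hA'0 : deriv A 0 = deriv u ℓ := by rw [hAd]; simp
  have hB'0 : deriv B 0 = deriv v ℓ := by rw [hBd]; simp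
  -- Wronskians of A with u and v
  have hAu : ∀ y, A y * deriv u y - deriv A y * u y = -(deriv u ℓ) := by
    intro y
    have := wron_const hA hA' hu hu' (fun z => by rw [hA2, hu2]; ring) y
    rw [hA0, hA'0, hu0, hu'0] at this; linarith
  have hAv : ∀ y, A y * deriv v y - deriv A y * v y = u ℓ := by
    intro y
    have := wron_const hA hA' hv hv' (fun z => by rw [hA2, hv2]; ring) y
    rw [hA0, hA'0, hv0, hv'0] at this; linarith
  have hBu : ∀ y, B y * deriv u y - deriv B y * u y = -(deriv v ℓ) := by
    intro y
    have := wron_const hB hB' hu hu' (fun z => by rw [hB2, hu2]; ring) y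
    rw [hB0, hB'0, hu0, hu'0] at this; linarith
  have hBv : ∀ y, B y * deriv v y - deriv B y * v y = v ℓ := by
    intro y
    have := wron_const hB hB' hv hv' (fun z => by rw [hB2, hv2]; ring) y
    rw [hB0, hB'0, hv0, hv'0] at this; linarith
  -- translation formulas
  have hAeq : ∀ y, A y = u ℓ * u y + deriv u ℓ * v y := by
    intro y
    linear_combination u y * (hAv y) - v y * (hAu y) - A y * (hWuv y)
  have hBeq : ∀ y, B y = v ℓ * u y + deriv v ℓ * v y := by
    intro y
    linear_combination u y * (hBv y) - v y * (hBu y) - B y * (hWuv y)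
  intro x _
  have hUx : u (x + ℓ) = u ℓ * u x + deriv u ℓ * v x := hAeq x
  have hVx : v (x + ℓ) = v ℓ * u x + deriv v ℓ * v x := hBeq x
  rw [hΦ (x + ℓ), hΦ x, hUx, hVx]
  linear_combination (v ℓ * (u x) ^ 2 - (u ℓ - deriv v ℓ) * (u x * v x)
      - deriv u ℓ * (v x) ^ 2) * (hWuv ℓ)
end
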